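/- If a convex body K in ℝ^d satisfies δ_T(K) = 1 (packings by translates can achieve density arbitrarily close to 1, i.e. supremum equal to 1), then ℝ^d can be tiled by translates of K. -/

import Mathlib

/-!
Either there are `ε, R > 0` such that every packing by translates of `K` leaves an uncovered
`ε`-ball within distance `R` of every point, or there are packings whose holes have size `→ 0`
on balls of radius `→ ∞`. In the first case double counting shows that a fixed fraction of every
large ball is uncovered, while the translates overlap only in their boundaries, which are null
for convex bodies; so the density is `< 1`. In the second case the translation vectors of these
packings converge, along an ultrafilter, to a point set that is still a packing (two translates
have disjoint interiors iff their difference avoids the open set `interior K - interior K`) and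
that covers the space by compactness of `K`. It is infinite and uniformly discrete, hence
countably infinite, and indexing it by `ℕ` gives the tiling.
-/

open MeasureTheory Filter Pointwise
open scoped ENNReal

/-- The translational packing density of a body `K ⊆ ℝ^d`: the supremum, over all
countable packings by translates of `K` (pairwise disjoint interiors), of the upper
density `limsup_{r→∞} (Σᵢ Vol((vᵢ +ᵥ K) ∩ B(0,r))) / Vol(B(0,r))`. -/
noncomputable def transPackingDensity {d : ℕ} (K : Set (EuclideanSpace ℝ (Fin d))) : ℝ≥0∞ :=
  ⨆ (v : ℕ → EuclideanSpace ℝ (Fin d))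
    (_ : ∀ i j, i ≠ j → Disjoint (interior (v i +ᵥ K)) (interior (v j +ᵥ K))),
    limsup (fun r : ℝ =>
      (∑' i, volume ((v i +ᵥ K) ∩ Metric.closedBall 0 r)) /
        volume (Metric.closedBall (0 : EuclideanSpace ℝ (Fin d)) r)) atTop

open Metric Set Module
open scoped Topology

theorem disjoint_vadd_set_vadd_set_iff {G : Type*} [AddCommGroup G] (s : Set G) (a b : G) :
    Disjoint (a +ᵥ s) (b +ᵥ s) ↔ a - b ∉ s - s := by
  simp only [Set.disjoint_left, Set.mem_sub, Set.mem_vadd_set, vadd_eq_add]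
  constructor
  · rintro h ⟨x, hx, y, hy, hxy⟩
    exact h ⟨y, hy, rfl⟩ ⟨x, hx, by rw [← sub_eq_sub_iff_add_eq_add.1 hxy, add_comm]⟩
  · rintro h _ ⟨y, hy, rfl⟩ ⟨x, hx, hxy⟩
    exact h ⟨x, hx, y, hy, sub_eq_sub_iff_add_eq_add.2 (by rw [add_comm, hxy])⟩

section Packing

variable {E : Type*} [NormedAddCommGroup E] {ι : Type*} {K : Set E} {v : ι → E}

def IsTransPacking (K : Set E) (v : ι → E) : Prop :=
  ∀ i j, i ≠ j → Disjoint (interior (v i +ᵥ K)) (interior (v j +ᵥ K))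

theorem isTransPacking_iff :
    IsTransPacking K v ↔ ∀ i j, i ≠ j → v i - v j ∉ interior K - interior K := by
  simp only [IsTransPacking, interior_vadd, disjoint_vadd_set_vadd_set_iff]

theorem IsTransPacking.sub_const (hv : IsTransPacking K v) (c : E) :
    IsTransPacking K fun i => v i - c := by
  rw [isTransPacking_iff] at hv ⊢
  simpa only [sub_sub_sub_cancel_right] using hv

theorem IsTransPacking.injective (hv : IsTransPacking K v) (hK : (interior K).Nonempty) :
    Function.Injective v := by
  intro i j hij
  by_contra hne
  refine isTransPacking_iff.1 hv i j hne ?_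
  rw [hij, sub_self, zero_mem_sub_iff, not_disjoint_iff_nonempty_inter, inter_self]
  exact hK

def HasUniformHoles (K : Set E) : Prop :=
  ∃ ε > 0, ∃ R > 0, ∀ v : ℕ → E, IsTransPacking K v →
    ∀ x, ∃ y, closedBall y ε ⊆ closedBall x R \ ⋃ i, v i +ᵥ K

end Packing

section Measure

variable {E : Type*} [NormedAddCommGroup E] [NormedSpace ℝ E] [FiniteDimensional ℝ E]
  [MeasurableSpace E] [BorelSpace E] (μ : Measure E) [μ.IsAddHaarMeasure] {ι : Type*}

theorem measure_closedBall_mul_le_of_forall_closedBall_subset_diff {W : Set E}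
    (hW : MeasurableSet W) {ε R : ℝ} (h : ∀ x, ∃ y, closedBall y ε ⊆ closedBall x R \ W)
    (r : ℝ) :
    μ (closedBall 0 r) * μ (closedBall 0 ε) ≤
      μ (closedBall 0 R) * μ (closedBall 0 (r + R) \ W) := by
  -- double count the pairs `(x, y)` with `‖x‖ ≤ r`, `y ∉ W` and `dist y x ≤ R`
  set A : Set (E × E) := {p | p.1 ∈ closedBall 0 r ∧ p.2 ∉ W ∧ dist p.2 p.1 ≤ R}
  have hA : MeasurableSet A :=
    (measurableSet_closedBall.preimage measurable_fst).inter <|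
      (hW.compl.preimage measurable_snd).inter <|
        (isClosed_le (continuous_snd.dist continuous_fst) continuous_const).measurableSet
  have hlower : μ (closedBall 0 r) * μ (closedBall 0 ε) ≤ μ.prod μ A := by
    rw [Measure.prod_apply hA, mul_comm, ← setLIntegral_const]
    refine (setLIntegral_mono' measurableSet_closedBall fun x hx => ?_).trans
      (setLIntegral_le_lintegral _ _)
    obtain ⟨y, hy⟩ := h x
    rw [← Measure.addHaar_closedBall_center μ y]
    exact measure_mono fun z hz => ⟨hx, (hy hz).2, mem_closedBall.1 (hy hz).1⟩
  have hupper : μ.prod μ A ≤ μ (closedBall 0 R) * μ (closedBall 0 (r + R) \ W) := by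
    rw [Measure.prod_apply_symm hA, ← lintegral_indicator_const
      (measurableSet_closedBall.diff hW)]
    refine lintegral_mono fun y => ?_
    by_cases hy : y ∈ closedBall 0 (r + R) \ W
    · rw [indicator_of_mem hy, ← Measure.addHaar_closedBall_center μ y]
      exact measure_mono fun x hx => mem_closedBall'.2 hx.2.2
    · rw [indicator_of_notMem hy, nonpos_iff_eq_zero]
      refine measure_mono_null (fun x hx => (hy ⟨?_, hx.2.1⟩).elim) measure_empty
      exact mem_closedBall.2 <| (dist_triangle y x 0).trans <| by
        linarith [mem_closedBall.1 hx.1, hx.2.2]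
  exact hlower.trans hupper

theorem measure_closedBall_div_mul_le_measure_diff {W : Set E} (hW : MeasurableSet W)
    {ε R : ℝ} (h : ∀ x, ∃ y, closedBall y ε ⊆ closedBall x R \ W) {t : ℝ}
    (ht : 2 * R ≤ t) :
    μ (closedBall 0 ε) / (2 ^ finrank ℝ E * μ (closedBall 0 R)) * μ (closedBall 0 t) ≤
      μ (closedBall 0 t \ W) := by
  have hdoubling : μ (closedBall 0 t) ≤ 2 ^ finrank ℝ E * μ (closedBall 0 (t - R)) := by
    calc μ (closedBall 0 t) = 2 ^ finrank ℝ E * μ (closedBall 0 (t / 2)) := by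
          have := Measure.addHaar_closedBall_mul_of_pos μ (0 : E) two_pos (t / 2)
          rwa [mul_div_cancel₀ _ two_ne_zero, ENNReal.ofReal_pow zero_le_two,
            ENNReal.ofReal_ofNat] at this
      _ ≤ 2 ^ finrank ℝ E * μ (closedBall 0 (t - R)) := by
          gcongr
          linarith
  have hholes := measure_closedBall_mul_le_of_forall_closedBall_subset_diff μ hW h (t - R)
  rw [sub_add_cancel] at hholes
  rw [← ENNReal.mul_div_right_comm]
  refine ENNReal.div_le_of_le_mul ?_
  calc μ (closedBall 0 ε) * μ (closedBall 0 t)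
      ≤ μ (closedBall 0 ε) * (2 ^ finrank ℝ E * μ (closedBall 0 (t - R))) := by gcongr
    _ = 2 ^ finrank ℝ E * (μ (closedBall 0 (t - R)) * μ (closedBall 0 ε)) := by ring
    _ ≤ 2 ^ finrank ℝ E * (μ (closedBall 0 R) * μ (closedBall 0 t \ W)) := by gcongr
    _ = μ (closedBall 0 t \ W) * (2 ^ finrank ℝ E * μ (closedBall 0 R)) := by ring

theorem tsum_measure_vadd_inter_add_measure_diff_le [Countable ι] {K : Set E} (hK : Convex ℝ K)
    {v : ι → E} (hv : IsTransPacking K v)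
    {B : Set E} (hB : MeasurableSet B) :
    ∑' i, μ ((v i +ᵥ K) ∩ B) + μ (B \ ⋃ i, v i +ᵥ K) ≤ μ B := by
  have hinterior : ∀ i, μ ((v i +ᵥ K) ∩ B) = μ (B ∩ interior (v i +ᵥ K)) := fun i => by
    rw [inter_comm]
    exact measure_congr <| (ae_eq_refl B).inter (interior_ae_eq_of_null_frontier
      ((hK.vadd (v i)).addHaar_frontier μ)).symm
  have hU : MeasurableSet (⋃ i, interior (v i +ᵥ K)) :=
    MeasurableSet.iUnion fun i => isOpen_interior.measurableSet
  calc ∑' i, μ ((v i +ᵥ K) ∩ B) + μ (B \ ⋃ i, v i +ᵥ K)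
      ≤ μ (B ∩ ⋃ i, interior (v i +ᵥ K)) + μ (B \ ⋃ i, interior (v i +ᵥ K)) := by
        refine add_le_add (le_of_eq ?_) (measure_mono (sdiff_subset_sdiff_right
          (iUnion_mono fun i => interior_subset)))
        rw [inter_iUnion, measure_iUnion (fun i j hij => (hv i j hij).mono inter_subset_right
          inter_subset_right) fun i => hB.inter isOpen_interior.measurableSet]
        exact tsum_congr hinterior
    _ = μ B := measure_inter_add_sdiff B hU

end Measure

theorem transPackingDensity_lt_one_of_hasUniformHoles {d : ℕ}
    {K : Set (EuclideanSpace ℝ (Fin d))} (hKcl : IsClosed K) (hKconv : Convex ℝ K)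
    (hholes : HasUniformHoles K) :
    transPackingDensity K < 1 := by
  obtain ⟨ε, hε, R, -, hholes⟩ := hholes
  let E := EuclideanSpace ℝ (Fin d)
  set q := volume (closedBall (0 : E) ε) / (2 ^ finrank ℝ E * volume (closedBall (0 : E) R))
  have hq : q ≠ 0 := (ENNReal.div_pos (measure_closedBall_pos volume (0 : E) hε).ne' <|
    ENNReal.mul_ne_top (ENNReal.pow_ne_top ENNReal.ofNat_ne_top) measure_closedBall_lt_top.ne).ne'
  refine lt_of_le_of_lt ?_ (ENNReal.sub_lt_self ENNReal.one_ne_top one_ne_zero hq)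
  rw [transPackingDensity]
  refine iSup₂_le fun v hv => limsup_le_of_le (by isBoundedDefault) ?_
  filter_upwards [eventually_ge_atTop (2 * R)] with t ht
  set B : Set E := closedBall 0 t
  have hB : volume B ≠ ∞ := measure_closedBall_lt_top.ne
  have hW : MeasurableSet (⋃ i, v i +ᵥ K) :=
    MeasurableSet.iUnion fun i => (hKcl.vadd (v i)).measurableSet
  have hcover := tsum_measure_vadd_inter_add_measure_diff_le volume hKconv hv
    (measurableSet_closedBall : MeasurableSet B)
  have huncovered := measure_closedBall_div_mul_le_measure_diff volume hW (hholes v hv) ht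
  refine ENNReal.div_le_of_le_mul ?_
  calc ∑' i, volume ((v i +ᵥ K) ∩ B)
      ≤ volume B - volume (B \ ⋃ i, v i +ᵥ K) :=
        ENNReal.le_sub_of_add_le_right (measure_ne_top_of_subset sdiff_subset hB) hcover
    _ ≤ volume B - q * volume B := tsub_le_tsub_left huncovered _
    _ = (1 - q) * volume B := by rw [ENNReal.sub_mul fun _ _ => hB, one_mul]

section Ultralimit

variable {E : Type*} [NormedAddCommGroup E] {α : Type*}

theorem mem_closure_of_tendsto_of_eventually_mem_cthickening {l : Filter α} [l.NeBot]
    {q : α → E} {k : E} {δ : α → ℝ} {K : Set E} (hq : Tendsto q l (𝓝 k))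
    (hδ : Tendsto δ l (𝓝 0)) (hK : ∀ᶠ n in l, q n ∈ cthickening (δ n) K) :
    k ∈ closure K := by
  rw [closure_eq_iInter_cthickening, mem_iInter₂]
  intro ε hε
  refine isClosed_cthickening.mem_of_tendsto hq ?_
  filter_upwards [hK, hδ.eventually (gt_mem_nhds hε)] with n hn hδn
  exact cthickening_mono hδn.le K hn

def ultralimit (U : Ultrafilter α) (S : α → Set E) : Set E :=
  {z | ∀ δ > 0, ∀ᶠ n in U, (ball z δ ∩ S n).Nonempty}

theorem pairwise_sub_notMem_ultralimit (U : Ultrafilter α) {S : α → Set E} {O : Set E}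
    (hO : IsOpen O) (hS : ∀ n, (S n).Pairwise fun a b => a - b ∉ O) :
    (ultralimit U S).Pairwise fun a b => a - b ∉ O := by
  intro a ha b hb hab hmem
  obtain ⟨ρ, hρ, hball⟩ := Metric.isOpen_iff.1 hO _ hmem
  have hδ : 0 < min ρ (dist a b) / 2 := half_pos (lt_min hρ (dist_pos.2 hab))
  obtain ⟨n, ⟨a', ha'a, ha'⟩, ⟨b', hb'b, hb'⟩⟩ := ((ha _ hδ).and (hb _ hδ)).exists
  rw [mem_ball] at ha'a hb'b
  have hmin := min_le_left ρ (dist a b)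
  have hmin' := min_le_right ρ (dist a b)
  refine hS n ha' hb' (fun h => ?_) (hball ?_)
  · subst h
    linarith [dist_triangle_left a b a']
  · rw [mem_ball]
    linarith [dist_sub_sub_le a' b' a b]

theorem exists_mem_ultralimit_sub_mem [ProperSpace E] (U : Ultrafilter α) {S : α → Set E}
    {K : Set E} (hK : IsCompact K) {δ : α → ℝ} (hδ : Tendsto δ U (𝓝 0)) {x : E}
    (hS : ∀ᶠ n in U, ∃ z ∈ S n, x - z ∈ cthickening (δ n) K) :
    ∃ z ∈ ultralimit U S, x - z ∈ K := by
  obtain ⟨p, hp⟩ := hS.choice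
  have hbounded : ∀ᶠ n in U, x - p n ∈ cthickening 1 K := by
    filter_upwards [hp, hδ.eventually (gt_mem_nhds one_pos)] with n hn hδn
    exact cthickening_mono hδn.le K hn.2
  obtain ⟨k, -, hk⟩ := (hK.cthickening (r := 1)).ultrafilter_le_nhds
    (U.map fun n => x - p n) (by rwa [Ultrafilter.coe_map, le_principal_iff, mem_map])
  have hpk : Tendsto (fun n => x - p n) U (𝓝 k) := hk
  refine ⟨x - k, fun ρ hρ => ?_, ?_⟩
  · have hp' : Tendsto p U (𝓝 (x - k)) := by simpa using hpk.const_sub x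
    filter_upwards [hp' (ball_mem_nhds _ hρ), hp] with n hn hpn using ⟨p n, hn, hpn.1⟩
  · rw [sub_sub_cancel, ← hK.isClosed.closure_eq]
    exact mem_closure_of_tendsto_of_eventually_mem_cthickening hpk hδ (hp.mono fun n hn => hn.2)

end Ultralimit

section Tiling

variable {E : Type*} [NormedAddCommGroup E]

theorem Set.Pairwise.countable_of_sub_notMem_nhds [TopologicalSpace.SeparableSpace E] {T O : Set E}
    (hO : O ∈ 𝓝 0) (hT : T.Pairwise fun a b => a - b ∉ O) : T.Countable := by
  obtain ⟨ρ, hρ, hball⟩ := Metric.mem_nhds_iff.1 hO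
  refine PairwiseDisjoint.countable_of_isOpen (s := fun z => ball z (ρ / 2))
    (fun a ha b hb hab => ?_) (fun _ _ => isOpen_ball) fun z _ =>
      ⟨z, mem_ball_self (half_pos hρ)⟩
  refine Set.disjoint_left.2 fun u hua hub => hT ha hb hab (hball ?_)
  rw [mem_ball, dist_zero_right, ← dist_eq_norm]
  linarith [dist_triangle_right a b u, mem_ball'.1 hua, mem_ball'.1 hub]

theorem exists_isTransPacking_iUnion_eq_univ [NormedSpace ℝ E] [ProperSpace E] [Nontrivial E]
    {K T : Set E} (hK : IsCompact K) (hKint : (interior K).Nonempty)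
    (hsep : T.Pairwise fun a b => a - b ∉ interior K - interior K)
    (hcov : ∀ x, ∃ z ∈ T, x - z ∈ K) :
    ∃ v : ℕ → E, IsTransPacking K v ∧ ⋃ i, v i +ᵥ K = univ := by
  have hcovT : ⋃ z ∈ T, z +ᵥ K = univ := eq_univ_of_forall fun x => by
    obtain ⟨z, hz, hxz⟩ := hcov x
    exact mem_biUnion hz ⟨x - z, hxz, add_sub_cancel z x⟩
  have hO : interior K - interior K ∈ 𝓝 (0 : E) := isOpen_interior.sub_right.mem_nhds <| by
    rw [zero_mem_sub_iff, not_disjoint_iff_nonempty_inter, inter_self]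
    exact hKint
  have hTinf : T.Infinite := fun hfin => noncompact_univ E <| by
    rw [← hcovT]
    exact hfin.isCompact_biUnion fun z _ => hK.vadd z
  obtain ⟨_⟩ := Set.countable_infinite_iff_nonempty_denumerable.1
    ⟨hsep.countable_of_sub_notMem_nhds hO, hTinf⟩
  set e := (Denumerable.eqv T).symm
  refine ⟨fun i => e i, isTransPacking_iff.2 fun i j hij => hsep (e i).2 (e j).2 ?_, ?_⟩
  · exact Subtype.coe_injective.ne (e.injective.ne hij)
  · rw [← hcovT, biUnion_eq_iUnion]
    exact (e.surjective.iUnion_comp fun z : T => (z : E) +ᵥ K)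

theorem exists_isTransPacking_sub_mem_cthickening_of_not_hasUniformHoles {K : Set E}
    (h : ¬HasUniformHoles K) {ε R : ℝ} (hε : 0 < ε) (hR : 0 ≤ R) :
    ∃ v : ℕ → E, IsTransPacking K v ∧
      ∀ p ∈ closedBall (0 : E) R, ∃ i, p - v i ∈ cthickening ε K := by
  obtain ⟨v, hv, x, hx⟩ : ∃ v : ℕ → E, IsTransPacking K v ∧
      ∃ x, ∀ y, ¬closedBall y ε ⊆ closedBall x (R + ε) \ ⋃ i, v i +ᵥ K := by
    by_contra! hcon
    exact h ⟨ε, hε, R + ε, by linarith, hcon⟩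
  refine ⟨fun i => v i - x, hv.sub_const x, fun p hp => ?_⟩
  obtain ⟨z, hz, hzW⟩ : ∃ z ∈ closedBall (p + x) ε, z ∈ ⋃ i, v i +ᵥ K := by
    by_contra! hcon
    refine hx (p + x) fun z hz => ⟨mem_closedBall.2 ?_, hcon z hz⟩
    have hpx : dist (p + x) x = ‖p‖ := by rw [dist_eq_norm, add_sub_cancel_right]
    linarith [dist_triangle z (p + x) x, mem_closedBall.1 hz, mem_closedBall_zero_iff.1 hp]
  obtain ⟨i, k, hk, rfl⟩ := mem_iUnion.1 hzW
  refine ⟨i, mem_cthickening_of_dist_le _ k _ _ hk ?_⟩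
  calc dist (p - (v i - x)) k = dist (v i + k) (p + x) := by
        rw [dist_eq_norm, dist_eq_norm, ← norm_neg]
        congr 1
        abel
    _ ≤ ε := mem_closedBall.1 hz

theorem exists_isTransPacking_iUnion_eq_univ_of_not_hasUniformHoles [NormedSpace ℝ E]
    [ProperSpace E] {K : Set E} (hK : IsCompact K) (hKint : (interior K).Nonempty)
    (h : ¬HasUniformHoles K) :
    ∃ v : ℕ → E, IsTransPacking K v ∧ ⋃ i, v i +ᵥ K = univ := by
  choose w hw hcov using fun n : ℕ =>
    exists_isTransPacking_sub_mem_cthickening_of_not_hasUniformHoles h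
      (Nat.one_div_pos_of_nat (n := n)) n.cast_nonneg
  have : Nontrivial E := ((hw 0).injective hKint).nontrivial
  set U := Ultrafilter.of (atTop : Filter ℕ)
  refine exists_isTransPacking_iUnion_eq_univ hK hKint
    (pairwise_sub_notMem_ultralimit U (S := fun n => range (w n)) isOpen_interior.sub_right
      fun n => ?_) fun x => exists_mem_ultralimit_sub_mem U hK
        (tendsto_one_div_add_atTop_nhds_zero_nat.mono_left (Ultrafilter.of_le _)) ?_
  · rintro _ ⟨i, rfl⟩ _ ⟨j, rfl⟩ hij
    exact isTransPacking_iff.1 (hw n) i j (ne_of_apply_ne _ hij)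
  · filter_upwards [Ultrafilter.of_le _ (eventually_ge_atTop ⌈‖x‖⌉₊)] with n hn
    obtain ⟨i, hi⟩ :=
      hcov n x (mem_closedBall_zero_iff.2 ((Nat.le_ceil _).trans (Nat.cast_le.2 hn)))
    exact ⟨w n i, mem_range_self i, hi⟩

end Tiling

/-- If a convex body `K ⊆ ℝ^d` has translational packing density `1`, then `ℝ^d` can be
tiled by translates of `K`: there is a packing by translates of `K` whose union is all
of `ℝ^d`. -/
theorem tiling_of_transPackingDensity_eq_one (d : ℕ)
    (K : Set (EuclideanSpace ℝ (Fin d)))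
    (hKcompact : IsCompact K) (hKconv : Convex ℝ K)
    (hKint : (interior K).Nonempty)
    (hδ : transPackingDensity K = 1) :
    ∃ v : ℕ → EuclideanSpace ℝ (Fin d),
      (∀ i j, i ≠ j → Disjoint (interior (v i +ᵥ K)) (interior (v j +ᵥ K))) ∧
      (⋃ i, v i +ᵥ K) = Set.univ := by
  by_cases hholes : HasUniformHoles K
  · exact absurd hδ
      (transPackingDensity_lt_one_of_hasUniformHoles hKcompact.isClosed hKconv hholes).ne
  · exact exists_isTransPacking_iUnion_eq_univ_of_not_hasUniformHoles hKcompact hKint hholes
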